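/- Let p ≥ 2, let φ : [0,1] → [0,1] be non-decreasing, left-continuous with φ(0)=0, φ(1)=1, satisfying φ(x) = Σ_{k=0}^{p−1}[φ((x+k)/p) − φ(k/p)] for all x, and with φ(0+) = 0. Suppose φ has jump α := φ(z₀+) − φ(z₀) at some z₀ ∈ [0,1]. Define C_m = { (z₀ + i)/p^{m−1} : i ∈ {0, …, p^{m−1} − 1} } for m ≥ 1. Then Σ_{x∈C_m} [φ(x+) − φ(x)] = α for every m ∈ ℕ. -/

import Mathlib

/-!
Write `J x = φ(x+) - φ(x)` for `x ∈ [0,1)` and `J 1 = 0`. Letting `x` decrease to a point of `[0,1)`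
in the functional equation, the constants `φ(k/p)` cancel and the jumps refine:
`J x = ∑_{k<p} J ((x+k)/p)`. Comparing the identity at `0` with its shift by one grid step gives it
at `x = 1` as well, so it can be iterated `m - 1` times from any `z₀ ∈ [0,1]`, which splits `J z₀`
into the jumps over `C_m`.
-/

open Set Filter Function Finset Topology

theorem Finset.sum_range_mul_eq_sum_sum {M : Type*} [AddCommMonoid M] (f : ℕ → M) (a b : ℕ) :
    ∑ j ∈ range (a * b), f j = ∑ i ∈ range a, ∑ k ∈ range b, f (i + k * a) := by
  induction b with
  | zero => simp
  | succ b ih =>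
    rw [Nat.mul_succ, sum_range_add, ih]
    simp only [sum_range_succ, sum_add_distrib, Nat.mul_comm b a, Nat.add_comm]

section Refinement

variable {𝕜 M : Type*} [Field 𝕜] [LinearOrder 𝕜] [IsStrictOrderedRing 𝕜] [AddCancelCommMonoid M]
  {p : ℕ} {J : 𝕜 → M}

theorem eq_sum_div_of_forall_mem_Ico (hp : 0 < p)
    (hJ : ∀ x ∈ Ico (0 : 𝕜) 1, J x = ∑ k ∈ range p, J ((x + k) / p)) :
    ∀ x ∈ Icc (0 : 𝕜) 1, J x = ∑ k ∈ range p, J ((x + k) / p) := by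
  intro x hx
  rcases hx.2.lt_or_eq with hx1 | rfl
  · exact hJ x ⟨hx.1, hx1⟩
  have hshift := sum_range_succ' (fun k : ℕ => J ((0 + k) / p)) p
  rw [sum_range_succ, ← hJ 0 ⟨le_rfl, zero_lt_one⟩, zero_add, div_self (by positivity)] at hshift
  simp only [Nat.cast_zero, zero_add, zero_div, Nat.cast_succ] at hshift
  rw [add_comm (J 0), add_right_cancel_iff] at hshift
  rw [hshift]
  exact sum_congr rfl fun k _ => by rw [add_comm (1 : 𝕜)]

theorem sum_range_pow_eq_of_forall_mem_Icc (hp : 0 < p)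
    (hJ : ∀ x ∈ Icc (0 : 𝕜) 1, J x = ∑ k ∈ range p, J ((x + k) / p))
    {z : 𝕜} (hz : z ∈ Icc (0 : 𝕜) 1) (n : ℕ) :
    ∑ i ∈ range (p ^ n), J ((z + i) / (p : 𝕜) ^ n) = J z := by
  induction n with
  | zero => simp
  | succ n ih =>
    have hpn : (0 : 𝕜) < (p : 𝕜) ^ n := by positivity
    have hmem : ∀ i ∈ range (p ^ n), (z + i) / (p : 𝕜) ^ n ∈ Icc (0 : 𝕜) 1 := by
      intro i hi
      have hi' : (i : 𝕜) + 1 ≤ (p : 𝕜) ^ n := by exact_mod_cast mem_range.1 hi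
      exact ⟨div_nonneg (add_nonneg hz.1 i.cast_nonneg) hpn.le,
        (div_le_one hpn).2 (by linarith [hz.2])⟩
    rw [pow_succ, pow_succ, sum_range_mul_eq_sum_sum, ← ih]
    refine sum_congr rfl fun i hi => ?_
    rw [hJ _ (hmem i hi)]
    refine sum_congr rfl fun k _ => congrArg J ?_
    push_cast
    field_simp
    ring

end Refinement

theorem MonotoneOn.tendsto_rightLim_of_mem_Ico {α β : Type*} [LinearOrder α] [TopologicalSpace α]
    [OrderTopology α] [DenselyOrdered α] [ConditionallyCompleteLinearOrder β] [TopologicalSpace β]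
    [OrderTopology β] {f : α → β} {a b c : α} (hf : MonotoneOn f (Icc a b)) (hc : c ∈ Ico a b) :
    Tendsto f (𝓝[>] c) (𝓝 (rightLim f c)) := by
  have := nhdsGT_neBot_of_exists_gt ⟨b, hc.2⟩
  have hsub : Ioo c b ⊆ Icc a b := Ioo_subset_Icc_self.trans (Icc_subset_Icc_left hc.1)
  have hlim := (hf.mono hsub).tendsto_nhdsWithin_Ioo_right (nonempty_Ioo.2 hc.2)
    ⟨f c, forall_mem_image.2 fun y hy => hf (Ico_subset_Icc_self hc) (hsub hy) hy.1.le⟩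
  rwa [rightLim_eq_of_tendsto hlim]

theorem tendsto_add_const_div_nhdsGT {𝕜 : Type*} [Field 𝕜] [LinearOrder 𝕜] [IsStrictOrderedRing 𝕜]
    [TopologicalSpace 𝕜] [IsTopologicalRing 𝕜] {p : 𝕜} (hp : 0 < p) (k x : 𝕜) :
    Tendsto (fun y => (y + k) / p) (𝓝[>] x) (𝓝[>] ((x + k) / p)) :=
  ((continuous_add_const k).div_const p).continuousWithinAt.tendsto_nhdsWithin
    fun _ hy => div_lt_div_of_pos_right (add_lt_add_left hy k) hp

-- `φ` is only given on `[0,1]`, so there is no jump to the right of `1`.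
noncomputable def unitJump (φ : ℝ → ℝ) (x : ℝ) : ℝ :=
  if x < 1 then rightLim φ x - φ x else 0

theorem unitJump_eq_sum (φ : ℝ → ℝ) {p : ℕ} (hp : 0 < p) (hmono : MonotoneOn φ (Icc 0 1))
    (hFE : ∀ x ∈ Icc (0 : ℝ) 1, φ x = ∑ k ∈ range p, (φ ((x + k) / p) - φ ((k : ℝ) / p)))
    {x : ℝ} (hx : x ∈ Ico (0 : ℝ) 1) :
    unitJump φ x = ∑ k ∈ range p, unitJump φ ((x + k) / p) := by
  have hp' : (0 : ℝ) < p := Nat.cast_pos.2 hp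
  have hmem : ∀ k ∈ range p, (x + k) / p ∈ Ico (0 : ℝ) 1 := by
    intro k hk
    have hk' : (k : ℝ) + 1 ≤ p := by exact_mod_cast mem_range.1 hk
    exact ⟨div_nonneg (add_nonneg hx.1 k.cast_nonneg) hp'.le,
      (div_lt_one hp').2 (by linarith [hx.2])⟩
  have hlim : Tendsto φ (𝓝[>] x)
      (𝓝 (∑ k ∈ range p, (rightLim φ ((x + k) / p) - φ ((k : ℝ) / p)))) := by
    refine Tendsto.congr' ?_ (tendsto_finsetSum _ fun k hk =>
      ((hmono.tendsto_rightLim_of_mem_Ico (hmem k hk)).comp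
        (tendsto_add_const_div_nhdsGT hp' k x)).sub_const _)
    filter_upwards [Ioo_mem_nhdsGT hx.2] with y hy
    exact (hFE y ⟨hx.1.trans hy.1.le, hy.2.le⟩).symm
  rw [unitJump, if_pos hx.2, rightLim_eq_of_tendsto hlim, hFE x (Ico_subset_Icc_self hx),
    ← sum_sub_distrib]
  refine sum_congr rfl fun k hk => ?_
  rw [unitJump, if_pos (hmem k hk).2]
  ring

theorem stmt15_general (p : ℕ) (hp : 2 ≤ p) (φ : ℝ → ℝ)
    (hmono : MonotoneOn φ (Set.Icc 0 1))
    (hFE : ∀ x ∈ Set.Icc (0:ℝ) 1,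
      φ x = ∑ k ∈ Finset.range p, (φ ((x + k) / p) - φ ((k : ℝ) / p)))
    (z₀ : ℝ) (hz : z₀ ∈ Set.Icc (0:ℝ) 1)
    (α : ℝ) (hα : α = if z₀ < 1 then Function.rightLim φ z₀ - φ z₀ else 0) :
    ∀ m : ℕ, 1 ≤ m →
      ∑ i ∈ Finset.range (p ^ (m - 1)),
        (if (z₀ + i) / (p : ℝ) ^ (m - 1) < 1
          then Function.rightLim φ ((z₀ + i) / (p : ℝ) ^ (m - 1))
            - φ ((z₀ + i) / (p : ℝ) ^ (m - 1))
          else 0) = α := by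
  intro m _
  have hp0 : 0 < p := by omega
  have hJ := eq_sum_div_of_forall_mem_Ico hp0 fun x hx => unitJump_eq_sum φ hp0 hmono hFE hx
  rw [hα]
  exact sum_range_pow_eq_of_forall_mem_Icc hp0 hJ hz (m - 1)

/-- for a non-decreasing left-continuous solution φ of the
functional equation with φ(0)=0, φ(1)=1, φ(0+)=0, and jump α at z₀, the sum of
the jumps of φ over C_m = {(z₀+i)/p^{m-1} : 0 ≤ i ≤ p^{m-1}-1} equals α for all m ≥ 1. -/
theorem stmt15 (p : ℕ) (hp : 2 ≤ p) (φ : ℝ → ℝ)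
    (hmono : MonotoneOn φ (Set.Icc 0 1))
    (hrange : ∀ x ∈ Set.Icc (0:ℝ) 1, φ x ∈ Set.Icc (0:ℝ) 1)
    (h0 : φ 0 = 0) (h1 : φ 1 = 1)
    (hlc : ∀ x ∈ Set.Icc (0:ℝ) 1, ContinuousWithinAt φ (Set.Iic x) x)
    (hFE : ∀ x ∈ Set.Icc (0:ℝ) 1,
      φ x = ∑ k ∈ Finset.range p, (φ ((x + k) / p) - φ ((k : ℝ) / p)))
    (h0plus : Filter.Tendsto φ (nhdsWithin 0 (Set.Ioi 0)) (nhds 0))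
    (z₀ : ℝ) (hz : z₀ ∈ Set.Icc (0:ℝ) 1)
    (α : ℝ) (hα : α = if z₀ < 1 then Function.rightLim φ z₀ - φ z₀ else 0) :
    ∀ m : ℕ, 1 ≤ m →
      ∑ i ∈ Finset.range (p ^ (m - 1)),
        (if (z₀ + i) / (p : ℝ) ^ (m - 1) < 1
          then Function.rightLim φ ((z₀ + i) / (p : ℝ) ^ (m - 1))
            - φ ((z₀ + i) / (p : ℝ) ^ (m - 1))
          else 0) = α :=
  stmt15_general p hp φ hmono hFE z₀ hz α hα
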